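/- arXiv:2103.08970 — 7 statements merged into one kernel-verified Lean document; each statement's English description precedes it below -/
import Mathlib

section
/- For any participation vector α with α_k > 0 for all k, the incentive coefficients θ*_k(α) = (Q − J_o(1 − Σ_m α_m) + N·J_{p_k}(α_k) − Σ_m J_{p_m}(α_m)) / (N α_k Q), where N = |K| + 1, make all utilities equal: u_o(α,θ*) = u_{p_k}(α_k, θ*_k) for every k ∈ K, and each of these utilities equals (Q − J_o(1 − Σ_m α_m) − Σ_m J_{p_m}(α_m)) / N. -/
/-- the equal-utility incentive coefficients equalize all utilities at U(α)/N. -/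
theorem equal_utility_incentive
    {K : Type*} [Fintype K] [Nonempty K] (Q : ℝ) (hQ : 0 < Q)
    (Jo : ℝ → ℝ) (Jp : K → ℝ → ℝ) (α : K → ℝ) (hα : ∀ k, 0 < α k)
    (N : ℝ) (hN : N = Fintype.card K + 1)
    (θs : K → ℝ)
    (hθs : ∀ k, θs k =
      (Q - Jo (1 - ∑ m, α m) + N * Jp k (α k) - ∑ m, Jp m (α m)) / (N * α k * Q)) :
    (Q - Jo (1 - ∑ k, α k) - ∑ k, α k * θs k * Q
        = (Q - Jo (1 - ∑ m, α m) - ∑ m, Jp m (α m)) / N) ∧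
    (∀ k, α k * θs k * Q - Jp k (α k)
        = (Q - Jo (1 - ∑ m, α m) - ∑ m, Jp m (α m)) / N) := by
  have hNpos : (0:ℝ) < N := by
    rw [hN]; positivity
  have hNne : N ≠ 0 := ne_of_gt hNpos
  have hQne : Q ≠ 0 := ne_of_gt hQ
  have hkey : ∀ k, α k * θs k * Q
      = (Q - Jo (1 - ∑ m, α m) + N * Jp k (α k) - ∑ m, Jp m (α m)) / N := by
    intro k
    rw [hθs k]
    have hαne : α k ≠ 0 := ne_of_gt (hα k)
    field_simp
  constructor
  · have hsum : ∑ k, α k * θs k * Q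
        = (Fintype.card K : ℝ) * ((Q - Jo (1 - ∑ m, α m) - ∑ m, Jp m (α m)) / N)
          + ∑ m, Jp m (α m) := by
      calc ∑ k, α k * θs k * Q
          = ∑ k, ((Q - Jo (1 - ∑ m, α m) - ∑ m, Jp m (α m)) / N + Jp k (α k)) := by
            refine Finset.sum_congr rfl fun k _ => ?_
            rw [hkey k]; field_simp; ring
        _ = _ := by
            rw [Finset.sum_add_distrib, Finset.sum_const, Finset.card_univ,
              nsmul_eq_mul]
    rw [hsum]
    have hcard : (Fintype.card K : ℝ) = N - 1 := by rw [hN]; ring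
    rw [hcard]
    field_simp
    ring
  · intro k
    rw [hkey k]
    field_simp
    ring
end

section
/- If the total utility U(α) = Q − J_o(1 − Σ_m α_m) − Σ_m J_{p_m}(α_m) is nonnegative and α_k > 0 for all k, then the equal-utility incentive vector θ*(α) given by θ*_k(α) = (Q − J_o(1 − Σ_m α_m) + N·J_{p_k}(α_k) − Σ_m J_{p_m}(α_m))/(N α_k Q) lies in the feasible region Ω, i.e., it satisfies Σ_k α_k θ*_k ≤ (Q − J_o(1 − Σ_m α_m))/Q and θ*_k ≥ J_{p_k}(α_k)/(α_k Q) for all k ∈ K. -/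
/-- with nonnegative total utility, the equal-utility incentive lies in Ω. -/
theorem equal_utility_incentive_feasible
    {K : Type*} [Fintype K] [Nonempty K] (Q : ℝ) (hQ : 0 < Q)
    (Jo : ℝ → ℝ) (Jp : K → ℝ → ℝ) (α : K → ℝ) (hα : ∀ k, 0 < α k)
    (N : ℝ) (hN : N = Fintype.card K + 1)
    (hU : 0 ≤ Q - Jo (1 - ∑ m, α m) - ∑ m, Jp m (α m))
    (θs : K → ℝ)
    (hθs : ∀ k, θs k =
      (Q - Jo (1 - ∑ m, α m) + N * Jp k (α k) - ∑ m, Jp m (α m)) / (N * α k * Q)) :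
    (∑ k, α k * θs k ≤ (Q - Jo (1 - ∑ m, α m)) / Q) ∧
    (∀ k, Jp k (α k) / (α k * Q) ≤ θs k) := by
  have hNpos : 0 < N := by rw [hN]; positivity
  have hNne : N ≠ 0 := ne_of_gt hNpos
  have hQne : Q ≠ 0 := ne_of_gt hQ
  set A := Jo (1 - ∑ m, α m) with hA
  set S := ∑ m, Jp m (α m) with hS
  constructor
  · have hsum : ∑ k, α k * θs k =
        (Fintype.card K : ℝ) * ((Q - A - S) / (N * Q)) + S / Q := by
      have h1 : ∀ k ∈ Finset.univ, α k * θs k =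
          (Q - A - S) / (N * Q) + Jp k (α k) / Q := by
        intro k _
        rw [hθs k]
        have hak : α k ≠ 0 := (hα k).ne'
        field_simp
        ring
      rw [Finset.sum_congr rfl h1, Finset.sum_add_distrib, Finset.sum_const,
        ← Finset.sum_div]
      simp [nsmul_eq_mul, hS]
    have key : (Q - A) / Q - ∑ k, α k * θs k = (Q - A - S) / (N * Q) := by
      rw [hsum, hN]
      field_simp
      ring
    have hpos : 0 ≤ (Q - A - S) / (N * Q) := div_nonneg hU (by positivity)
    linarith
  · intro k
    have hak : α k ≠ 0 := (hα k).ne'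
    have key : θs k - Jp k (α k) / (α k * Q) = (Q - A - S) / (N * α k * Q) := by
      rw [hθs k]
      field_simp
      ring
    have hpos : 0 ≤ (Q - A - S) / (N * α k * Q) :=
      div_nonneg hU (mul_pos (mul_pos hNpos (hα k)) hQ).le
    linarith
end

section
/- Suppose (α_NBS, θ_NBS) maximizes the Nash product Π_{z∈Z} u_z(α,θ) over the feasible region Ω, where utilities are as defined and the equal-utility incentive is always feasible for every α appearing in Ω. Then (α_NBS, θ_NBS) maximizes total social welfare: Σ_{z∈Z} u_z(α_NBS, θ_NBS) ≥ Σ_{z∈Z} u_z(α', θ') for all (α',θ') ∈ Ω. -/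
/-- AM-GM: product ≤ (mean)^card for nonnegative reals. -/
lemma amgm_aux {ι : Type*} [Fintype ι] (f : ι → ℝ) (hf : ∀ i, 0 ≤ f i)
    (hn : 0 < Fintype.card ι) :
    ∏ i, f i ≤ ((∑ i, f i) / (Fintype.card ι)) ^ (Fintype.card ι) := by
  set n := Fintype.card ι with hn'
  have hnR : (0:ℝ) < n := by exact_mod_cast hn
  have h := Real.geom_mean_le_arith_mean_weighted Finset.univ (fun _ => (n:ℝ)⁻¹) f
    (fun i _ => by positivity) (by simp [Finset.card_univ, ← hn']; field_simp)
    (fun i _ => hf i)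
  have hsum : ∑ i, (n:ℝ)⁻¹ * f i = (∑ i, f i) / n := by
    rw [← Finset.mul_sum]; ring
  rw [hsum] at h
  have hprodnn : 0 ≤ ∏ i, f i ^ ((n:ℝ)⁻¹) :=
    Finset.prod_nonneg fun i _ => Real.rpow_nonneg (hf i) _
  have h2 := pow_le_pow_left₀ hprodnn h n
  calc ∏ i, f i = (∏ i, f i ^ ((n:ℝ)⁻¹)) ^ n := by
        rw [← Finset.prod_pow]
        refine Finset.prod_congr rfl fun i _ => ?_
        rw [← Real.rpow_natCast (f i ^ ((n:ℝ)⁻¹)) n, ← Real.rpow_mul (hf i),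
          inv_mul_cancel₀ (ne_of_gt hnR), Real.rpow_one]
    _ ≤ ((∑ i, f i) / n) ^ n := h2

/-- Theorem 1: a Nash-product maximizer over Ω maximizes total social welfare,
assuming the equal-utility incentive is feasible for every feasible α.
Players: `none` is the coordinator, `some k` is commercial player k. -/
theorem nash_bargaining_maximizes_welfare
    {K : Type*} [Fintype K] [Nonempty K] (Q : ℝ) (hQ : 0 < Q)
    (Jo : ℝ → ℝ) (Jp : K → ℝ → ℝ)
    (N : ℝ) (hN : N = Fintype.card K + 1)
    (u : Option K → (K → ℝ) → (K → ℝ) → ℝ)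
    (hu0 : ∀ α θ, u none α θ = Q - Jo (1 - ∑ k, α k) - ∑ k, α k * θ k * Q)
    (huk : ∀ k α θ, u (some k) α θ = α k * θ k * Q - Jp k (α k))
    (Ω : Set ((K → ℝ) × (K → ℝ)))
    (hΩ : ∀ p, p ∈ Ω ↔ (∀ k, 0 < p.1 k) ∧ ∀ z, 0 ≤ u z p.1 p.2)
    (θs : (K → ℝ) → K → ℝ)
    (hθs : ∀ α k, θs α k =
      (Q - Jo (1 - ∑ m, α m) + N * Jp k (α k) - ∑ m, Jp m (α m)) / (N * α k * Q))
    (hfeas : ∀ α θ, (α, θ) ∈ Ω → (α, θs α) ∈ Ω)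
    (αN θN : K → ℝ) (hmem : (αN, θN) ∈ Ω)
    (hmax : ∀ α' θ', (α', θ') ∈ Ω → ∏ z, u z α' θ' ≤ ∏ z, u z αN θN) :
    ∀ α' θ', (α', θ') ∈ Ω → ∑ z, u z α' θ' ≤ ∑ z, u z αN θN := by
  intro α' θ' hmem'
  set n : ℕ := Fintype.card K + 1 with hn
  have hcard : Fintype.card (Option K) = n := by simp [hn]
  have hNn : N = (n : ℝ) := by rw [hN, hn]; push_cast; ring
  have hNpos : (0:ℝ) < N := by rw [hNn]; positivity
  -- total welfare depends only on α
  have hsum : ∀ α θ, ∑ z, u z α θ = Q - Jo (1 - ∑ k, α k) - ∑ k, Jp k (α k) := by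
    intro α θ
    rw [Fintype.sum_option, hu0]
    simp only [huk]
    rw [Finset.sum_sub_distrib]
    ring
  set W : (K → ℝ) → ℝ := fun α => Q - Jo (1 - ∑ k, α k) - ∑ k, Jp k (α k) with hW
  -- equal utilities under θs
  have hequal : ∀ α θ, (α, θ) ∈ Ω → ∀ z, u z α (θs α) = W α / N := by
    intro α θ hαθ z
    have hαpos : ∀ k, 0 < α k := ((hΩ _).1 hαθ).1
    have hQ' : Q ≠ 0 := ne_of_gt hQ
    have hN' : N ≠ 0 := by
      rw [hN]; positivity
    have hterm : ∀ k, α k * θs α k * Q =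
        (Q - Jo (1 - ∑ m, α m) + N * Jp k (α k) - ∑ m, Jp m (α m)) / N := by
      intro k
      have hαk : α k ≠ 0 := ne_of_gt (hαpos k)
      rw [hθs]
      field_simp
    match z with
    | some k =>
      rw [huk, hterm, hW]
      field_simp
      ring
    | none =>
      rw [hu0]
      simp only [hterm]
      have hsum2 : ∑ x : K, (Q - Jo (1 - ∑ m, α m) + N * Jp x (α x) - ∑ m, Jp m (α m)) / N
          = ((Fintype.card K : ℝ) * ((Q - Jo (1 - ∑ m, α m)) - ∑ m, Jp m (α m))
              + N * ∑ m, Jp m (α m)) / N := by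
        rw [← Finset.sum_div]
        congr 1
        simp only [Finset.sum_sub_distrib, Finset.sum_add_distrib, Finset.sum_const,
          Finset.card_univ, nsmul_eq_mul, ← Finset.mul_sum]
        ring
      rw [hsum2, hW]
      have hKcard : (Fintype.card K : ℝ) = N - 1 := by rw [hN]; ring
      rw [hKcard]
      field_simp
      ring
  -- Nash product at (α, θs α) equals (W α / N)^n
  have hprodθs : ∀ α θ, (α, θ) ∈ Ω → ∏ z, u z α (θs α) = (W α / N) ^ n := by
    intro α θ hαθ
    calc ∏ z, u z α (θs α) = ∏ _z : Option K, (W α / N) :=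
          Finset.prod_congr rfl fun z _ => hequal α θ hαθ z
      _ = (W α / N) ^ n := by rw [Finset.prod_const, Finset.card_univ, hcard]
  -- key chain
  have hmem's := hfeas _ _ hmem'
  have h1 : (W α' / N) ^ n = ∏ z, u z α' (θs α') := (hprodθs α' θ' hmem').symm
  have h2 : ∏ z, u z α' (θs α') ≤ ∏ z, u z αN θN := hmax _ _ hmem's
  have hnnN : ∀ z, 0 ≤ u z αN θN := ((hΩ _).1 hmem).2
  have h3 : ∏ z, u z αN θN ≤ ((∑ z, u z αN θN) / N) ^ n := by
    have := amgm_aux (fun z => u z αN θN) hnnN (by rw [hcard]; omega)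
    rwa [hcard, ← hNn] at this
  have h4 : ((∑ z, u z αN θN) / N) ^ n = (W αN / N) ^ n := by rw [hsum αN θN]
  have hfin : (W α' / N) ^ n ≤ (W αN / N) ^ n := by
    calc (W α' / N) ^ n ≤ ((∑ z, u z αN θN) / N) ^ n := h1 ▸ le_trans h2 h3
      _ = _ := h4
  have hnn1 : 0 ≤ W α' / N := by
    have := (((hΩ _).1 hmem's).2) none
    rwa [hequal α' (θs α') hmem's none] at this
  have hnn2 : 0 ≤ W αN / N := by
    have : 0 ≤ ∑ z, u z αN θN := Finset.sum_nonneg fun z _ => hnnN z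
    rw [hsum αN θN] at this
    positivity
  have : W α' / N ≤ W αN / N :=
    (pow_le_pow_iff_left₀ hnn1 hnn2 (by omega)).1 hfin
  have hWle : W α' ≤ W αN := by
    have h := mul_le_mul_of_nonneg_right this hNpos.le
    rwa [div_mul_cancel₀ _ (ne_of_gt hNpos), div_mul_cancel₀ _ (ne_of_gt hNpos)] at h
  rw [hsum α' θ', hsum αN θN]
  exact hWle
end

section
/- Under the same hypotheses, the Nash bargaining solution also maximizes the minimum utility among players: min_{z∈Z} u_z(α_NBS, θ_NBS) ≥ min_{z∈Z} u_z(α', θ') for all (α', θ') ∈ Ω. -/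
/-- Theorem 2: the Nash bargaining solution maximizes the minimum utility. -/
theorem nash_bargaining_maximizes_min_utility
    {K : Type*} [Fintype K] [Nonempty K] (Q : ℝ) (hQ : 0 < Q)
    (Jo : ℝ → ℝ) (Jp : K → ℝ → ℝ)
    (N : ℝ) (hN : N = Fintype.card K + 1)
    (u : Option K → (K → ℝ) → (K → ℝ) → ℝ)
    (hu0 : ∀ α θ, u none α θ = Q - Jo (1 - ∑ k, α k) - ∑ k, α k * θ k * Q)
    (huk : ∀ k α θ, u (some k) α θ = α k * θ k * Q - Jp k (α k))
    (Ω : Set ((K → ℝ) × (K → ℝ)))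
    (hΩ : ∀ p, p ∈ Ω ↔ (∀ k, 0 < p.1 k) ∧ ∀ z, 0 ≤ u z p.1 p.2)
    (θs : (K → ℝ) → K → ℝ)
    (hθs : ∀ α k, θs α k =
      (Q - Jo (1 - ∑ m, α m) + N * Jp k (α k) - ∑ m, Jp m (α m)) / (N * α k * Q))
    (hfeas : ∀ α θ, (α, θ) ∈ Ω → (α, θs α) ∈ Ω)
    (αN θN : K → ℝ) (hmem : (αN, θN) ∈ Ω)
    (hmax : ∀ α' θ', (α', θ') ∈ Ω → ∏ z, u z α' θ' ≤ ∏ z, u z αN θN)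
    (heq : ∀ z, u z αN θN = (Q - Jo (1 - ∑ m, αN m) - ∑ m, Jp m (αN m)) / N) :
    ∀ α' θ', (α', θ') ∈ Ω →
      (Finset.univ.inf' Finset.univ_nonempty fun z : Option K => u z α' θ') ≤
      (Finset.univ.inf' Finset.univ_nonempty fun z : Option K => u z αN θN) := by
  intro α' θ' hmem'
  have hNpos : 0 < N := by
    rw [hN]; positivity
  have hN0 : N ≠ 0 := hNpos.ne'
  have hcardK : (Fintype.card K : ℝ) = N - 1 := by rw [hN]; ring
  have hcardO : (Fintype.card (Option K) : ℝ) = N := by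
    rw [Fintype.card_option, hN]; push_cast; ring
  have hfeas' := hfeas α' θ' hmem'
  have hpos' : ∀ k, 0 < α' k := ((hΩ _).1 hmem').1
  have hnn' : ∀ z, 0 ≤ u z α' θ' := ((hΩ _).1 hmem').2
  have hnnθ : ∀ z, 0 ≤ u z α' (θs α') := ((hΩ _).1 hfeas').2
  have hnnN : ∀ z, 0 ≤ u z αN θN := ((hΩ _).1 hmem).2
  set A : ℝ := Q - Jo (1 - ∑ m, α' m) with hA
  set S : ℝ := ∑ m, Jp m (α' m) with hS
  set UN : ℝ := (Q - Jo (1 - ∑ m, αN m) - ∑ m, Jp m (αN m)) / N with hUN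
  -- each transfer term under the equal-utility incentive
  have hterm : ∀ k, α' k * θs α' k * Q = (A - S) / N + Jp k (α' k) := by
    intro k
    rw [hθs]
    have h1 : α' k ≠ 0 := (hpos' k).ne'
    have h2 : Q ≠ 0 := hQ.ne'
    field_simp
    ring
  -- all utilities are equal under the equal-utility incentive
  have hequ : ∀ z, u z α' (θs α') = (A - S) / N := by
    intro z
    match z with
    | some k => rw [huk, hterm k]; ring
    | none =>
      rw [hu0]
      rw [Finset.sum_congr rfl (fun k _ => hterm k), Finset.sum_add_distrib,
        Finset.sum_const, Finset.card_univ, nsmul_eq_mul, hcardK]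
      field_simp
      ring
  -- products
  have hprodθ : (∏ z, u z α' (θs α')) = ((A - S) / N) ^ Fintype.card (Option K) := by
    rw [Finset.prod_congr rfl (fun z _ => hequ z), Finset.prod_const, Finset.card_univ]
  have hprodN : (∏ z, u z αN θN) = UN ^ Fintype.card (Option K) := by
    rw [Finset.prod_congr rfl (fun z _ => heq z), Finset.prod_const, Finset.card_univ]
  have hle := hmax α' (θs α') hfeas'
  rw [hprodθ, hprodN] at hle
  have h1 : 0 ≤ (A - S) / N := (hequ none) ▸ hnnθ none
  have h2 : 0 ≤ UN := (heq none) ▸ hnnN none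
  have hkey : (A - S) / N ≤ UN :=
    le_of_pow_le_pow_left₀ (by simp [Fintype.card_option]) h2 hle
  -- min at NBS equals UN
  have hminN : (Finset.univ.inf' Finset.univ_nonempty fun z : Option K => u z αN θN) = UN := by
    rw [show (fun z : Option K => u z αN θN) = fun _ => UN from funext fun z => heq z]
    exact Finset.inf'_const _ _
  -- sum of utilities at (α', θ') equals A - S
  have hsum : (∑ z, u z α' θ') = A - S := by
    rw [Fintype.sum_option, hu0]
    have : (∑ k, u (some k) α' θ') = (∑ k, α' k * θ' k * Q) - S := by
      rw [hS, ← Finset.sum_sub_distrib]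
      exact Finset.sum_congr rfl fun k _ => huk k α' θ'
    rw [this]; ring
  -- min ≤ average
  have hmin_le : (Finset.univ.inf' Finset.univ_nonempty fun z : Option K => u z α' θ')
      ≤ (A - S) / N := by
    have hcs := Finset.card_nsmul_le_sum Finset.univ (fun z : Option K => u z α' θ')
      (Finset.univ.inf' Finset.univ_nonempty fun z : Option K => u z α' θ')
      (fun z _ => Finset.inf'_le _ (Finset.mem_univ z))
    rw [Finset.card_univ, nsmul_eq_mul, hcardO, hsum] at hcs
    rw [le_div_iff₀ hNpos, mul_comm]
    exact hcs
  rw [hminN]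
  exact hmin_le.trans hkey
end

section
/- Suppose α_NBS maximizes the total utility U(α) = Q − J_o(1 − Σ_m α_m) − Σ_m J_{p_m}(α_m) over all feasible α, U(α_NBS) ≥ 0, and θ_NBS = θ*(α_NBS) is the equal-utility incentive. Then (α_NBS, θ_NBS) maximizes the Nash product Π_{z∈Z} u_z(α,θ) over the feasible region Ω. -/
/-!
The utilities of all players always add up to the total welfare `U α`, so by AM-GM the Nash
product at any feasible point is at most `(U α / N) ^ N ≤ (U α_NBS / N) ^ N`. The equal-utility
incentive `θ*` gives every provider, and hence also the owner, exactly `U α_NBS / N`, so the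
Nash product at `(α_NBS, θ*(α_NBS))` attains this bound.
-/

open Finset

theorem Real.prod_le_pow_of_sum_le {ι : Type*} [Fintype ι] [Nonempty ι] {f : ι → ℝ} {S : ℝ}
    (hf : ∀ i, 0 ≤ f i) (hS : ∑ i, f i ≤ S) :
    ∏ i, f i ≤ (S / Fintype.card ι) ^ Fintype.card ι := by
  have hcard : 0 < Fintype.card ι := Fintype.card_pos
  have hprod : 0 ≤ ∏ i, f i := prod_nonneg fun i _ => hf i
  have amgm := Real.geom_mean_le_arith_mean univ (fun _ => 1) f (by simp) (by simpa using hcard)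
    (fun i _ => hf i)
  simp only [Real.rpow_one, sum_const, card_univ, nsmul_eq_mul, mul_one, one_mul] at amgm
  calc ∏ i, f i = ((∏ i, f i) ^ (Fintype.card ι : ℝ)⁻¹) ^ Fintype.card ι :=
        (Real.rpow_inv_natCast_pow hprod hcard.ne').symm
    _ ≤ ((∑ i, f i) / Fintype.card ι) ^ Fintype.card ι := by gcongr
    _ ≤ (S / Fintype.card ι) ^ Fintype.card ι := by
        gcongr
        exact div_nonneg (sum_nonneg fun i _ => hf i) (Nat.cast_nonneg _)

section Game

variable {K : Type*} [Fintype K] {Q : ℝ} {Jo : ℝ → ℝ} {Jp : K → ℝ → ℝ}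
  {u : Option K → (K → ℝ) → (K → ℝ) → ℝ} {U : (K → ℝ) → ℝ}

theorem sum_utility_eq_welfare
    (hu0 : ∀ α θ, u none α θ = Q - Jo (1 - ∑ k, α k) - ∑ k, α k * θ k * Q)
    (huk : ∀ k α θ, u (some k) α θ = α k * θ k * Q - Jp k (α k))
    (hU : ∀ α, U α = Q - Jo (1 - ∑ m, α m) - ∑ m, Jp m (α m)) (α θ : K → ℝ) :
    ∑ z, u z α θ = U α := by
  simp only [Fintype.sum_option, hu0, huk, hU, sum_sub_distrib]
  ring

theorem utility_eq_welfare_div_of_equal_incentive {N : ℝ} (hQ : 0 < Q)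
    (hN : N = Fintype.card K + 1)
    (hu0 : ∀ α θ, u none α θ = Q - Jo (1 - ∑ k, α k) - ∑ k, α k * θ k * Q)
    (huk : ∀ k α θ, u (some k) α θ = α k * θ k * Q - Jp k (α k))
    (hU : ∀ α, U α = Q - Jo (1 - ∑ m, α m) - ∑ m, Jp m (α m))
    {α θ : K → ℝ} (hα : ∀ k, 0 < α k)
    (hθ : ∀ k, θ k =
      (Q - Jo (1 - ∑ m, α m) + N * Jp k (α k) - ∑ m, Jp m (α m)) / (N * α k * Q)) :
    ∀ z, u z α θ = U α / N := by
  have hN0 : N ≠ 0 := by rw [hN]; positivity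
  have hprovider : ∀ k, u (some k) α θ = U α / N := by
    intro k
    have hαk := (hα k).ne'
    rw [huk, hθ k, hU]
    field_simp
    ring
  have hsum := sum_utility_eq_welfare hu0 huk hU α θ
  simp only [Fintype.sum_option, hprovider, sum_const, card_univ, nsmul_eq_mul] at hsum
  rintro (_ | k)
  · rw [eq_sub_of_add_eq hsum, hN]
    field_simp
    ring
  · exact hprovider k

end Game

theorem welfare_maximizer_with_equal_incentive_maximizes_nash_product_general
    {K : Type*} [Fintype K] (Q : ℝ) (hQ : 0 < Q)
    (Jo : ℝ → ℝ) (Jp : K → ℝ → ℝ)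
    (N : ℝ) (hN : N = Fintype.card K + 1)
    (u : Option K → (K → ℝ) → (K → ℝ) → ℝ)
    (hu0 : ∀ α θ, u none α θ = Q - Jo (1 - ∑ k, α k) - ∑ k, α k * θ k * Q)
    (huk : ∀ k α θ, u (some k) α θ = α k * θ k * Q - Jp k (α k))
    (Ω : Set ((K → ℝ) × (K → ℝ)))
    (hΩ : ∀ p, p ∈ Ω ↔ (∀ k, 0 < p.1 k) ∧ ∀ z, 0 ≤ u z p.1 p.2)
    (U : (K → ℝ) → ℝ)
    (hU : ∀ α, U α = Q - Jo (1 - ∑ m, α m) - ∑ m, Jp m (α m))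
    (αN : K → ℝ) (hαN : ∀ k, 0 < αN k)
    (hmaxU : ∀ α θ, (α, θ) ∈ Ω → U α ≤ U αN)
    (θN : K → ℝ)
    (hθN : ∀ k, θN k =
      (Q - Jo (1 - ∑ m, αN m) + N * Jp k (αN k) - ∑ m, Jp m (αN m)) / (N * αN k * Q)) :
    ∀ α' θ', (α', θ') ∈ Ω → ∏ z, u z α' θ' ≤ ∏ z, u z αN θN := by
  intro α' θ' hmem
  have hcard : (Fintype.card (Option K) : ℝ) = N := by simp [hN]
  have hequal := utility_eq_welfare_div_of_equal_incentive hQ hN hu0 huk hU hαN hθN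
  calc ∏ z, u z α' θ'
      ≤ (U αN / Fintype.card (Option K)) ^ Fintype.card (Option K) :=
        Real.prod_le_pow_of_sum_le ((hΩ _).1 hmem).2
          ((sum_utility_eq_welfare hu0 huk hU α' θ').trans_le (hmaxU α' θ' hmem))
    _ = ∏ z, u z αN θN := by simp only [hequal, prod_const, card_univ, hcard]

/-- converse / analytical approach: if α_NBS maximizes the total utility over
the feasible α's and θ_NBS is the equal-utility incentive, then (α_NBS, θ_NBS) maximizes the
Nash product over Ω. -/
theorem welfare_maximizer_with_equal_incentive_maximizes_nash_product
    {K : Type*} [Fintype K] [Nonempty K] (Q : ℝ) (hQ : 0 < Q)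
    (Jo : ℝ → ℝ) (Jp : K → ℝ → ℝ)
    (N : ℝ) (hN : N = Fintype.card K + 1)
    (u : Option K → (K → ℝ) → (K → ℝ) → ℝ)
    (hu0 : ∀ α θ, u none α θ = Q - Jo (1 - ∑ k, α k) - ∑ k, α k * θ k * Q)
    (huk : ∀ k α θ, u (some k) α θ = α k * θ k * Q - Jp k (α k))
    (Ω : Set ((K → ℝ) × (K → ℝ)))
    (hΩ : ∀ p, p ∈ Ω ↔ (∀ k, 0 < p.1 k) ∧ ∀ z, 0 ≤ u z p.1 p.2)
    (U : (K → ℝ) → ℝ)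
    (hU : ∀ α, U α = Q - Jo (1 - ∑ m, α m) - ∑ m, Jp m (α m))
    (αN : K → ℝ) (hαN : ∀ k, 0 < αN k)
    (hUpos : 0 ≤ U αN)
    (hmaxU : ∀ α θ, (α, θ) ∈ Ω → U α ≤ U αN)
    (θN : K → ℝ)
    (hθN : ∀ k, θN k =
      (Q - Jo (1 - ∑ m, αN m) + N * Jp k (αN k) - ∑ m, Jp m (αN m)) / (N * αN k * Q)) :
    ∀ α' θ', (α', θ') ∈ Ω → ∏ z, u z α' θ' ≤ ∏ z, u z αN θN :=
  welfare_maximizer_with_equal_incentive_maximizes_nash_product_general Q hQ Jo Jp N hN u hu0 huk Ω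
    hΩ U hU αN hαN hmaxU θN hθN
end

section
/- Nonzero-disagreement generalization: suppose each player z has disagreement utility r_z, and define surplus utilities s_z = u_z − r_z. If (α_NBS, θ_NBS) maximizes Π_z (u_z(α,θ) − r_z) over the region where all surpluses are nonnegative, and for every feasible α there exists θ equalizing all surpluses while remaining feasible, then (α_NBS, θ_NBS) maximizes total surplus Σ_z (u_z − r_z), equivalently total welfare Σ_z u_z since Σ_z r_z is constant. -/
open Finset

/-- Unweighted AM-GM: product ≤ (average)^card. -/
lemma amgm_prod_le {ι : Type*} [Fintype ι] [Nonempty ι] (f : ι → ℝ)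
    (hf : ∀ i, 0 ≤ f i) :
    ∏ i, f i ≤ ((∑ i, f i) / Fintype.card ι) ^ Fintype.card ι := by
  set n := Fintype.card ι with hn
  have hnpos : 0 < (n : ℝ) := by exact_mod_cast Fintype.card_pos
  have h := Real.geom_mean_le_arith_mean_weighted Finset.univ
      (fun _ => (n : ℝ)⁻¹) f (fun i _ => by positivity)
      (by rw [Finset.sum_const, Finset.card_univ, nsmul_eq_mul, ← hn, mul_inv_cancel₀ (ne_of_gt hnpos)]) (fun i _ => hf i)
  have hprod : ∏ i, f i ^ ((n : ℝ)⁻¹) = (∏ i, f i) ^ ((n : ℝ)⁻¹) := by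
    rw [← Real.finset_prod_rpow _ _ (fun i _ => hf i)]
  have hsum : ∑ i, (n : ℝ)⁻¹ * f i = (∑ i, f i) / n := by
    rw [← Finset.mul_sum]; ring
  rw [hprod, hsum] at h
  have hP : (0 : ℝ) ≤ ∏ i, f i := Finset.prod_nonneg (fun i _ => hf i)
  have h2 := pow_le_pow_left₀ (Real.rpow_nonneg hP _) h n
  calc ∏ i, f i = ((∏ i, f i) ^ ((n : ℝ)⁻¹)) ^ n := by
        rw [← Real.rpow_natCast ((∏ i, f i) ^ ((n : ℝ)⁻¹)) n,
          ← Real.rpow_mul hP, inv_mul_cancel₀ (ne_of_gt hnpos), Real.rpow_one]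
    _ ≤ ((∑ i, f i) / n) ^ n := h2

/-- Remark 1: nonzero disagreement points — a maximizer of the product of
surpluses maximizes the total surplus (equivalently total welfare). -/
theorem nash_bargaining_nonzero_disagreement
    {K : Type*} [Fintype K] [Nonempty K] (Q : ℝ) (hQ : 0 < Q)
    (Jo : ℝ → ℝ) (Jp : K → ℝ → ℝ)
    (u : Option K → (K → ℝ) → (K → ℝ) → ℝ)
    (hu0 : ∀ α θ, u none α θ = Q - Jo (1 - ∑ k, α k) - ∑ k, α k * θ k * Q)
    (huk : ∀ k α θ, u (some k) α θ = α k * θ k * Q - Jp k (α k))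
    (r : Option K → ℝ)
    (Ω : Set ((K → ℝ) × (K → ℝ)))
    (hΩ : ∀ p, p ∈ Ω ↔ (∀ k, 0 < p.1 k) ∧ ∀ z, 0 ≤ u z p.1 p.2 - r z)
    (hfeas : ∀ α θ, (α, θ) ∈ Ω → ∃ θ'' : K → ℝ, (α, θ'') ∈ Ω ∧
      ∀ z z', u z α θ'' - r z = u z' α θ'' - r z')
    (αN θN : K → ℝ) (hmem : (αN, θN) ∈ Ω)
    (hmax : ∀ α' θ', (α', θ') ∈ Ω →
      ∏ z, (u z α' θ' - r z) ≤ ∏ z, (u z αN θN - r z)) :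
    (∀ α' θ', (α', θ') ∈ Ω →
      ∑ z, (u z α' θ' - r z) ≤ ∑ z, (u z αN θN - r z)) ∧
    (∀ α' θ', (α', θ') ∈ Ω →
      ∑ z, u z α' θ' ≤ ∑ z, u z αN θN) := by
  have key : ∀ α θ, ∑ z, u z α θ = Q - Jo (1 - ∑ k, α k) - ∑ k, Jp k (α k) := by
    intro α θ
    rw [Fintype.sum_option, hu0]
    simp only [huk]
    rw [Finset.sum_sub_distrib]
    ring
  set n := Fintype.card (Option K) with hn
  have hnpos : 0 < n := Fintype.card_pos
  have hnR : 0 < (n : ℝ) := by exact_mod_cast hnpos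
  -- surpluses at NBS are nonnegative
  have hNnum := ((hΩ (αN, θN)).mp hmem).2
  have hSN : (0:ℝ) ≤ ∑ z, (u z αN θN - r z) :=
    Finset.sum_nonneg fun z _ => hNnum z
  have hAMGM : ∏ z, (u z αN θN - r z) ≤
      ((∑ z, (u z αN θN - r z)) / n) ^ n :=
    amgm_prod_le _ hNnum
  have main : ∀ α' θ', (α', θ') ∈ Ω →
      ∑ z, (u z α' θ' - r z) ≤ ∑ z, (u z αN θN - r z) := by
    intro α' θ' hmem'
    obtain ⟨θ'', hmem'', heq⟩ := hfeas α' θ' hmem'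
    set s := u none α' θ'' - r none with hs
    have hs0 : 0 ≤ s := ((hΩ (α', θ'')).mp hmem'').2 none
    have hall : ∀ z, u z α' θ'' - r z = s := fun z => heq z none
    have hprod : ∏ z, (u z α' θ'' - r z) = s ^ n := by
      rw [Finset.prod_congr rfl fun z _ => hall z]
      simp [hn, Finset.card_univ]
    have hsum'' : ∑ z, (u z α' θ'' - r z) = n * s := by
      rw [Finset.sum_congr rfl fun z _ => hall z]
      simp [hn, Finset.card_univ]
    have hsumeq : ∑ z, (u z α' θ' - r z) = ∑ z, (u z α' θ'' - r z) := by
      rw [Finset.sum_sub_distrib, Finset.sum_sub_distrib, key, key]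
    have hchain : s ^ n ≤ ((∑ z, (u z αN θN - r z)) / n) ^ n := by
      rw [← hprod]; exact le_trans (hmax α' θ'' hmem'') hAMGM
    have hsle : s ≤ (∑ z, (u z αN θN - r z)) / n := by
      have := (pow_le_pow_iff_left₀ hs0 (by positivity) hnpos.ne').mp hchain
      exact this
    rw [hsumeq, hsum'']
    calc (n : ℝ) * s ≤ n * ((∑ z, (u z αN θN - r z)) / n) := by
          exact mul_le_mul_of_nonneg_left hsle (le_of_lt hnR)
      _ = ∑ z, (u z αN θN - r z) := by field_simp
  refine ⟨main, fun α' θ' h => ?_⟩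
  have := main α' θ' h
  rw [Finset.sum_sub_distrib, Finset.sum_sub_distrib] at this
  linarith
end

section
/- At the Nash bargaining solution with the equal-utility incentive, the coordinator's total expense J_o(1 − Σ_k α_k) + Σ_k α_k θ*_k(α) Q equals Q − U(α)/N, and hence is strictly less than the baseline cost Q whenever the total utility U(α) is strictly positive. -/
/-- at the Nash bargaining solution the coordinator's total expense equals
Q − U(α)/N, hence is strictly below the baseline cost Q whenever U(α) > 0. -/
theorem coordinator_expense_below_baseline
    {K : Type*} [Fintype K] [Nonempty K] (Q : ℝ) (hQ : 0 < Q)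
    (Jo : ℝ → ℝ) (Jp : K → ℝ → ℝ) (α : K → ℝ) (hα : ∀ k, 0 < α k)
    (N : ℝ) (hN : N = Fintype.card K + 1)
    (θs : K → ℝ)
    (hθs : ∀ k, θs k =
      (Q - Jo (1 - ∑ m, α m) + N * Jp k (α k) - ∑ m, Jp m (α m)) / (N * α k * Q))
    (U : ℝ) (hU : U = Q - Jo (1 - ∑ m, α m) - ∑ m, Jp m (α m)) :
    (Jo (1 - ∑ k, α k) + ∑ k, α k * θs k * Q = Q - U / N) ∧
    (0 < U → Jo (1 - ∑ k, α k) + ∑ k, α k * θs k * Q < Q) := by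
  have hNpos : 0 < N := by
    rw [hN]; positivity
  have hNnz : N ≠ 0 := hNpos.ne'
  have hsum : ∑ k, α k * θs k * Q
      = ∑ k, ((Q - Jo (1 - ∑ m, α m) - ∑ m, Jp m (α m)) / N + Jp k (α k)) := by
    refine Finset.sum_congr rfl fun k _ => ?_
    rw [hθs k]
    have hαk : α k ≠ 0 := (hα k).ne'
    field_simp
    ring
  have hmain : Jo (1 - ∑ k, α k) + ∑ k, α k * θs k * Q = Q - U / N := by
    rw [hsum, Finset.sum_add_distrib, Finset.sum_const, Finset.card_univ, nsmul_eq_mul]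
    have hcard : (Fintype.card K : ℝ) = N - 1 := by rw [hN]; ring
    rw [hcard, hU]
    field_simp
    ring
  refine ⟨hmain, fun hUpos => ?_⟩
  rw [hmain]
  have : 0 < U / N := div_pos hUpos hNpos
  linarith
end
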